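/- Let R be a finite (not necessarily unital, not necessarily commutative) ring and S a subring of R. Then Pr(S, R) = Pr(S) if and only if S + C_R(r) = R for all r ∈ S. -/

import Mathlib

open scoped Pointwise

/-- The probability that a randomly chosen pair, one element from `S` and one from `T`,
commutes (multiplicatively). For a subring `S` of a finite ring `R` this gives
`Pr(S, R) = relCommProb R S Set.univ`, `Pr(R) = relCommProb R Set.univ Set.univ`, etc. -/
noncomputable def relCommProb (R : Type*) [NonUnitalRing R] (S T : Set R) : ℚ :=
  (Nat.card {p : S × T // (p.1 : R) * (p.2 : R) = (p.2 : R) * (p.1 : R)} : ℚ) /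
    ((Nat.card S : ℚ) * (Nat.card T : ℚ))

/-- `C_S(r)`: the centralizer of `r` in the subring `S`, as an additive subgroup of `R`.
Taking `S = ⊤` gives `C_R(r)`. -/
def centIn {R : Type*} [NonUnitalRing R] (S : NonUnitalSubring R) (r : R) : AddSubgroup R where
  carrier := {x | x ∈ S ∧ x * r = r * x}
  zero_mem' := ⟨S.zero_mem, by rw [zero_mul, mul_zero]⟩
  add_mem' := by
    rintro a b ⟨ha, ha'⟩ ⟨hb, hb'⟩
    exact ⟨S.add_mem ha hb, by rw [add_mul, mul_add, ha', hb']⟩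
  neg_mem' := by
    rintro a ⟨ha, ha'⟩
    exact ⟨S.neg_mem ha, by rw [neg_mul, mul_neg, ha']⟩

/-- `Z(S, R)`: the elements of the subring `S` commuting with every element of `R`,
as an additive subgroup of `R`.  Taking `S = ⊤` gives the center `Z(R)`. -/
def zCenter {R : Type*} [NonUnitalRing R] (S : NonUnitalSubring R) : AddSubgroup R where
  carrier := {x | x ∈ S ∧ ∀ r : R, x * r = r * x}
  zero_mem' := ⟨S.zero_mem, fun r => by rw [zero_mul, mul_zero]⟩
  add_mem' := by
    rintro a b ⟨ha, ha'⟩ ⟨hb, hb'⟩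
    exact ⟨S.add_mem ha hb, fun r => by rw [add_mul, mul_add, ha' r, hb' r]⟩
  neg_mem' := by
    rintro a ⟨ha, ha'⟩
    exact ⟨S.neg_mem ha, fun r => by rw [neg_mul, mul_neg, ha' r]⟩

/-- `K(S, R)`: the set of additive commutators `s*r - r*s` with `s ∈ S`, `r ∈ R`. -/
def kSet {R : Type*} [NonUnitalRing R] (S : NonUnitalSubring R) : Set R :=
  {x | ∃ s ∈ S, ∃ r : R, x = s * r - r * s}

/-- `[S, R]`: the additive subgroup of `(R, +)` generated by `K(S, R)`. -/
def commSub {R : Type*} [NonUnitalRing R] (S : NonUnitalSubring R) : AddSubgroup R :=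
  AddSubgroup.closure (kSet S)

/-- `[x, R]`: the additive subgroup of all commutators `x*y - y*x`, `y ∈ R`. -/
def elemComm {R : Type*} [NonUnitalRing R] (x : R) : AddSubgroup R where
  carrier := {z | ∃ y : R, z = x * y - y * x}
  zero_mem' := ⟨0, by simp⟩
  add_mem' := by
    rintro a b ⟨y, rfl⟩ ⟨z, rfl⟩
    exact ⟨y + z, by rw [mul_add, add_mul]; abel⟩
  neg_mem' := by
    rintro a ⟨y, rfl⟩
    exact ⟨-y, by rw [mul_neg, neg_mul]; abel⟩

/-!
Counting commuting pairs by their first coordinate gives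
`Pr(S, R) = (1/|S|) ∑_{s ∈ S} |C_R(s)|/|R|` and `Pr(S) = (1/|S|) ∑_{s ∈ S} |C_S(s)|/|S|`.
Since `C_S(s) = S ∩ C_R(s)`, the product formula `|S + C_R(s)| |S ∩ C_R(s)| = |S| |C_R(s)|`
for additive subgroups turns each summand of the first sum into the corresponding summand of
the second times `|S + C_R(s)| / |R| ≤ 1`. The sums therefore agree exactly when every
`S + C_R(s)` is all of `R`.
-/

namespace AddSubgroup

theorem card_mul_relIndex {G : Type*} [AddGroup G] {H K : AddSubgroup G} (h : H ≤ K) :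
    Nat.card H * H.relIndex K = Nat.card K := by
  simpa only [relIndex_bot_left] using relIndex_mul_relIndex ⊥ H K bot_le h

theorem card_sup_mul_card_inf {G : Type*} [AddCommGroup G] (A B : AddSubgroup G) :
    Nat.card ↥(A ⊔ B) * Nat.card ↥(A ⊓ B) = Nat.card A * Nat.card B := by
  rw [← card_mul_relIndex (le_sup_right : B ≤ A ⊔ B),
    ← card_mul_relIndex (inf_le_left : A ⊓ B ≤ A), relIndex_sup_right, inf_relIndex_left]
  ring

end AddSubgroup

section Centralizers

variable {R : Type*} [NonUnitalRing R]

theorem centIn_eq_inf (S : NonUnitalSubring R) (r : R) :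
    centIn S r = S.toAddSubgroup ⊓ centIn ⊤ r := by
  ext x
  simp [centIn]

theorem card_commuting_eq_card_centIn (T : NonUnitalSubring R) (s : R) :
    Nat.card {t : (T : Set R) // s * t = t * s} = Nat.card (centIn T s) :=
  Nat.card_congr
    ⟨fun t => ⟨t, t.1.2, t.2.symm⟩, fun x => ⟨⟨x, x.2.1⟩, x.2.2.symm⟩, fun _ => rfl, fun _ => rfl⟩

open Classical in
theorem relCommProb_eq_sum [Fintype R] (S T : NonUnitalSubring R) :
    relCommProb R S T =
      (∑ s : S, (Nat.card (centIn T s) : ℚ) / Nat.card T) / Nat.card S := by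
  rw [relCommProb, Nat.card_congr (Equiv.subtypeProdEquivSigmaSubtype fun (s : (S : Set R))
    (t : (T : Set R)) => (s : R) * t = t * s), Nat.card_sigma]
  simp only [card_commuting_eq_card_centIn]
  push_cast
  rw [← Finset.sum_div, div_div, mul_comm (Nat.card T : ℚ)]

variable [Finite R] (S : NonUnitalSubring R) (r : R)

theorem card_centIn_top_div_card :
    (Nat.card (centIn ⊤ r) : ℚ) / Nat.card R =
      Nat.card (centIn S r) / Nat.card S *
        (Nat.card ↥(S.toAddSubgroup ⊔ centIn ⊤ r) / Nat.card R) := by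
  have key := S.toAddSubgroup.card_sup_mul_card_inf (centIn ⊤ r)
  rw [← centIn_eq_inf] at key
  have hS : (Nat.card S : ℚ) ≠ 0 := by exact_mod_cast Nat.card_pos.ne'
  have hR : (Nat.card R : ℚ) ≠ 0 := by exact_mod_cast Nat.card_pos.ne'
  rw [div_mul_div_comm, div_eq_div_iff hR (mul_ne_zero hS hR)]
  have key' : (_ : ℚ) = _ := congrArg (Nat.cast : ℕ → ℚ) key
  push_cast at key'
  linear_combination (-(Nat.card R : ℚ)) * key'

theorem card_centIn_top_div_card_le :
    (Nat.card (centIn ⊤ r) : ℚ) / Nat.card R ≤ Nat.card (centIn S r) / Nat.card S := by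
  rw [card_centIn_top_div_card S r]
  refine mul_le_of_le_one_right (by positivity) (div_le_one_of_le₀ ?_ (by positivity))
  exact_mod_cast AddSubgroup.card_le_card_addGroup _

theorem card_centIn_top_div_card_eq_iff :
    (Nat.card (centIn ⊤ r) : ℚ) / Nat.card R = Nat.card (centIn S r) / Nat.card S ↔
      (S : Set R) + (centIn ⊤ r : Set R) = Set.univ := by
  have hC : (Nat.card (centIn S r) : ℚ) / Nat.card S ≠ 0 :=
    div_ne_zero (by exact_mod_cast Nat.card_pos.ne') (by exact_mod_cast Nat.card_pos.ne')
  have hR : (Nat.card R : ℚ) ≠ 0 := by exact_mod_cast Nat.card_pos.ne'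
  rw [card_centIn_top_div_card S r, mul_eq_left₀ hC, div_eq_one_iff_eq hR,
    Nat.cast_inj, AddSubgroup.card_eq_iff_eq_top, ← AddSubgroup.coe_eq_univ,
    AddSubgroup.add_normal]
  rfl

end Centralizers

/-- `Pr(S, R) = Pr(S)` iff `S + C_R(r) = R` for all `r ∈ S`. -/
theorem relCommProb_eq_commProb_self_iff {R : Type*} [NonUnitalRing R] [Fintype R]
    (S : NonUnitalSubring R) :
    relCommProb R (S : Set R) Set.univ = relCommProb R (S : Set R) (S : Set R) ↔
      ∀ r ∈ S, (S : Set R) + ((centIn ⊤ r : AddSubgroup R) : Set R) = Set.univ := by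
  classical
  have hS : (Nat.card S : ℚ) ≠ 0 := by exact_mod_cast Nat.card_pos.ne'
  have hR : Nat.card (⊤ : NonUnitalSubring R) = Nat.card R :=
    Nat.card_congr NonUnitalSubring.topEquiv.toEquiv
  rw [← NonUnitalSubring.coe_top, relCommProb_eq_sum, relCommProb_eq_sum, hR, div_left_inj' hS,
    Finset.sum_eq_sum_iff_of_le fun (s : S) _ => card_centIn_top_div_card_le S s]
  simp only [Finset.mem_univ, true_implies, card_centIn_top_div_card_eq_iff, Subtype.forall,
    NonUnitalSubring.coe_top]
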